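/- The pair (∂, −λ_{y²}∘∂_y) is not contained in the k-subalgebra of the product algebra End_k(k[x]) × End_k(k[y]) generated by the four elements e, f, κ, κ'. (Since this pair lies in the ring Γ_q(ℙ¹) of global q-differential operators, the homomorphism η : U_q(sl_2) → Γ_q(ℙ¹) is not surjective.) -/

import Mathlib

/-!
The first components of `e, f, κ, κ'` are built from `λ_{x²}`, `σ^{±2}` and `∂^{β^{±2}}`, each of
which sends `x^b` to `∑ᵢ cᵢ(b) x^(b + dᵢ)` with finitely many shifts `dᵢ` and coefficients `cᵢ`
that are exponential polynomials `n ↦ ∑ⱼ aⱼ q^(jn)`. Exponential polynomials are closed under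
products and shifts, so this shape survives sums and compositions and holds on the whole generated
subalgebra. But `∂ x^b = b x^(b-1)`, and `b ↦ b` is not an exponential polynomial since `q` is not a
root of unity.
-/

open Polynomial

noncomputable section

namespace QDiff1

variable (k : Type*) [Field k]

/-- Left multiplication operator `λ_r`. -/
def lmul (r : k[X]) : Module.End k k[X] := LinearMap.mulLeft k r

variable {k}

/-- The automorphism `σ_a`, acting on `x^b` by `q^(a*b)`. -/
def sigma (q : k) (a : ℤ) : Module.End k k[X] :=
  (aeval (C (q ^ a) * X) : k[X] →ₐ[k] k[X]).toLinearMap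

/-- The operator `∂^{β^a}`, sending `x^b` to `(1 + q^a + ⋯ + q^{a(b-1)}) x^(b-1)`. -/
def dq (q : k) (a : ℤ) : Module.End k k[X] :=
  (Polynomial.basisMonomials k).constr k
    fun b => (∑ i ∈ Finset.range b, q ^ (a * (i : ℤ))) • X ^ (b - 1)

/-- `φ` is homogeneous of degree `a : ℤ`. -/
def IsHomog (a : ℤ) (φ : Module.End k k[X]) : Prop :=
  ∀ b : ℕ, ∃ c : k, φ (X ^ b) = c • (if 0 ≤ a + (b : ℤ) then X ^ (a + (b : ℤ)).toNat else 0)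

/-- `M` is closed under `φ ↦ λ_r ∘ φ ∘ λ_s`. -/
def Closed (M : Submodule k (Module.End k k[X])) : Prop :=
  ∀ r s : k[X], ∀ φ ∈ M, lmul k r * φ * lmul k s ∈ M

/-- The filtration `D_q^n` of `q`-differential operators on `k[x]`. -/
def Dq (q : k) : ℕ → Submodule k (Module.End k k[X])
  | 0 => sInf {M | Closed M ∧
      {φ : Module.End k k[X] | ∃ a : ℤ, IsHomog a φ ∧ ∀ b : ℕ,
        φ * lmul k (X ^ b) = q ^ (a * (b : ℤ)) • (lmul k (X ^ b) * φ)} ⊆ ↑M}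
  | n + 1 => sInf {M | Closed M ∧ Dq q n ≤ M ∧
      {φ : Module.End k k[X] | ∃ a : ℤ, IsHomog a φ ∧ ∀ b : ℕ,
        φ * lmul k (X ^ b) - q ^ (a * (b : ℤ)) • (lmul k (X ^ b) * φ) ∈ Dq q n} ⊆ ↑M}


/-- Images of the generators E, F, K, K⁻¹ of U_q(sl₂) under η, as pairs of
operators on k[x] and k[y] (both polynomial rings are modelled by k[X];
in the second factor, sigma q (-1) plays the role of σ_y and dq q (-2)
the role of ∂_y^{β²}). -/
def eElt (q : k) : Module.End k k[X] × Module.End k k[X] :=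
  (-(q ^ 2 • (lmul k (X ^ 2) * dq q 2)), q • dq q (-2))

def fElt (q : k) : Module.End k k[X] × Module.End k k[X] :=
  (q⁻¹ • (sigma q (-2) * dq q 2), -((q ^ 2)⁻¹ • (sigma q 2 * lmul k (X ^ 2) * dq q (-2))))

def kElt (q : k) : Module.End k k[X] × Module.End k k[X] :=
  (sigma q 2, sigma q (-2))

def kElt' (q : k) : Module.End k k[X] × Module.End k k[X] :=
  (sigma q (-2), sigma q 2)

lemma isAlgebraic_of_isOfFinOrder {R A : Type*} [CommRing R] [Nontrivial R] [Ring A]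
    [Algebra R A] {x : A} (hx : IsOfFinOrder x) : IsAlgebraic R x := by
  obtain ⟨n, hn, hxn⟩ := isOfFinOrder_iff_pow_eq_one.1 hx
  exact ⟨X ^ n - C 1, X_pow_sub_C_ne_zero hn 1, by simp [hxn]⟩

section ExpPoly

variable (u : kˣ)

def expFun (j : ℤ) : ℤ → k := fun n => (u : k) ^ (j * n)

def expPoly : Submodule k (ℤ → k) := Submodule.span k (Set.range (expFun u))

lemma expFun_zero : expFun u 0 = 1 := by
  funext n
  simp [expFun]

lemma expFun_mul (i j : ℤ) : expFun u i * expFun u j = expFun u (i + j) := by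
  funext n
  simp only [expFun, Pi.mul_apply, add_mul, zpow_add₀ u.ne_zero]

lemma expFun_comp_add (j d : ℤ) :
    (fun n => expFun u j (n + d)) = (u : k) ^ (j * d) • expFun u j := by
  funext n
  simp only [expFun, Pi.smul_apply, smul_eq_mul, mul_add, zpow_add₀ u.ne_zero, mul_comm]

variable {u}

lemma expFun_mem_expPoly (j : ℤ) : expFun u j ∈ expPoly u :=
  Submodule.subset_span ⟨j, rfl⟩

lemma one_mem_expPoly : (1 : ℤ → k) ∈ expPoly u :=
  expFun_zero u ▸ expFun_mem_expPoly 0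

lemma mul_mem_expPoly {f g : ℤ → k} (hf : f ∈ expPoly u) (hg : g ∈ expPoly u) :
    f * g ∈ expPoly u := by
  have hfg := Submodule.mul_mem_mul hf hg
  rw [expPoly, Submodule.span_mul_span] at hfg
  refine Submodule.span_mono ?_ hfg
  rintro _ ⟨_, ⟨i, rfl⟩, _, ⟨j, rfl⟩, rfl⟩
  exact ⟨i + j, (expFun_mul u i j).symm⟩

lemma comp_add_mem_expPoly {f : ℤ → k} (hf : f ∈ expPoly u) (d : ℤ) :
    (fun n => f (n + d)) ∈ expPoly u := by
  have hmap : (expPoly u).map (LinearMap.funLeft k k (· + d)) ≤ expPoly u := by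
    refine (Submodule.map_span_le _ _ _).2 ?_
    rintro _ ⟨j, rfl⟩
    show (fun n => expFun u j (n + d)) ∈ expPoly u
    rw [expFun_comp_add]
    exact (expPoly u).smul_mem _ (expFun_mem_expPoly j)
  exact hmap ⟨f, hf, rfl⟩

/-- Shifted by one so that only the values at positive integers enter. -/
def natDiff : (ℤ → k) →ₗ[k] (ℕ → k) where
  toFun f n := f (n + 2) - f (n + 1)
  map_add' f g := by
    funext n
    simp only [Pi.add_apply]
    ring
  map_smul' c f := by
    funext n
    simp only [Pi.smul_apply, smul_eq_mul, RingHom.id_apply]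
    ring

/-- The difference operator would turn `n ↦ n` into the constant `1`, a combination of the
characters `n ↦ (q^j)^n` with `j ≠ 0`, against Dedekind's independence of characters. -/
theorem exists_natCast_ne_of_mem_expPoly (hu : ¬IsOfFinOrder u) {f : ℤ → k}
    (hf : f ∈ expPoly u) : ∃ n : ℕ, 0 < n ∧ f n ≠ n := by
  by_contra! hid
  let χ : ℤ → ℕ → k := fun j n => ((u : k) ^ j) ^ n
  have hχ : LinearIndependent k χ := by
    refine (linearIndependent_monoidHom (Multiplicative ℕ) k).comp
      (fun j => powersHom k ((u : k) ^ j)) ?_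
    intro i j hij
    apply injective_zpow_iff_not_isOfFinOrder.2 hu
    simpa [Units.ext_iff] using (powersHom k).injective hij
  have hdiff : ∀ j, natDiff (expFun u j) = ((u : k) ^ (2 * j) - (u : k) ^ j) • χ j := by
    intro j
    funext n
    have hpow : ∀ m : ℕ, (u : k) ^ (j * m) = ((u : k) ^ j) ^ m := fun m => by
      rw [zpow_mul, zpow_natCast]
    have hsq : (u : k) ^ (2 * j) = ((u : k) ^ j) ^ 2 := by
      rw [mul_comm, zpow_mul, zpow_two, sq]
    have hpow₁ := hpow (n + 1)
    have hpow₂ := hpow (n + 2)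
    push_cast at hpow₁ hpow₂
    simp only [natDiff, LinearMap.coe_mk, AddHom.coe_mk, expFun, χ, Pi.smul_apply, smul_eq_mul,
      hpow₁, hpow₂, hsq]
    ring
  have hmap : (expPoly u).map natDiff ≤ Submodule.span k (χ '' {0}ᶜ) := by
    refine (Submodule.map_span_le _ _ _).2 ?_
    rintro _ ⟨j, rfl⟩
    rw [hdiff]
    by_cases hj : j = 0
    · simp [hj]
    · exact Submodule.smul_mem _ _ (Submodule.subset_span ⟨j, hj, rfl⟩)
  have hone : natDiff f = χ 0 := by
    funext n
    have h1 := hid (n + 1) n.succ_pos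
    have h2 := hid (n + 2) (by omega)
    push_cast at h1 h2
    simp only [natDiff, LinearMap.coe_mk, AddHom.coe_mk, χ, zpow_zero, one_pow, h1, h2]
    ring
  exact hχ.notMem_span_image (s := {0}ᶜ) (x := 0) (by simp) (hone ▸ hmap ⟨f, hf, rfl⟩)

end ExpPoly

section ExpPolySymbol

variable {u : kˣ}

/-- The vanishing condition makes the junk value of `Int.toNat` at negative exponents harmless. -/
def HasExpPolySymbol (u : kˣ) (φ : Module.End k k[X]) : Prop :=
  ∃ (ι : Type) (_ : Fintype ι) (d : ι → ℤ) (c : ι → ℤ → k),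
    (∀ i, c i ∈ expPoly u) ∧ (∀ i (b : ℕ), (b : ℤ) + d i < 0 → c i b = 0) ∧
    ∀ b : ℕ, φ (X ^ b) = ∑ i, c i b • X ^ ((b : ℤ) + d i).toNat

lemma HasExpPolySymbol.of_single {φ : Module.End k k[X]} (d : ℤ) {c : ℤ → k}
    (hc : c ∈ expPoly u) (hvan : ∀ b : ℕ, (b : ℤ) + d < 0 → c b = 0)
    (hφ : ∀ b : ℕ, φ (X ^ b) = c b • X ^ ((b : ℤ) + d).toNat) : HasExpPolySymbol u φ :=
  ⟨Unit, inferInstance, fun _ => d, fun _ => c, fun _ => hc, fun _ => hvan, by simpa using hφ⟩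

lemma HasExpPolySymbol.add {φ ψ : Module.End k k[X]} (hφ : HasExpPolySymbol u φ)
    (hψ : HasExpPolySymbol u ψ) : HasExpPolySymbol u (φ + ψ) := by
  obtain ⟨ι, _, d, c, hc, hcv, hφ⟩ := hφ
  obtain ⟨κ, _, e, g, hg, hgv, hψ⟩ := hψ
  refine ⟨ι ⊕ κ, inferInstance, Sum.elim d e, Sum.elim c g, ?_, ?_, fun b => ?_⟩
  · rintro (i | j)
    exacts [hc i, hg j]
  · rintro (i | j)
    exacts [hcv i, hgv j]
  · simp only [LinearMap.add_apply, hφ, hψ, Fintype.sum_sum_type, Sum.elim_inl, Sum.elim_inr]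

lemma HasExpPolySymbol.mul {φ ψ : Module.End k k[X]} (hφ : HasExpPolySymbol u φ)
    (hψ : HasExpPolySymbol u ψ) : HasExpPolySymbol u (φ * ψ) := by
  obtain ⟨ι, _, d, c, hc, hcv, hφ⟩ := hφ
  obtain ⟨κ, _, e, g, hg, hgv, hψ⟩ := hψ
  refine ⟨κ × ι, inferInstance, fun p => e p.1 + d p.2, fun p n => g p.1 n * c p.2 (n + e p.1),
    fun p => mul_mem_expPoly (hg p.1) (comp_add_mem_expPoly (hc p.2) (e p.1)), fun p b hb => ?_,
    fun b => ?_⟩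
  · dsimp only at hb ⊢
    rcases lt_or_ge ((b : ℤ) + e p.1) 0 with h | h
    · rw [hgv p.1 b h, zero_mul]
    · obtain ⟨m, hm⟩ := Int.eq_ofNat_of_zero_le h
      rw [hm, hcv p.2 m (by omega), mul_zero]
  · rw [Module.End.mul_apply, hψ, map_sum, Fintype.sum_prod_type]
    refine Finset.sum_congr rfl fun j _ => ?_
    rcases lt_or_ge ((b : ℤ) + e j) 0 with h | h
    · simp only [hgv j b h, zero_smul, map_zero, zero_mul, Finset.sum_const_zero]
    · obtain ⟨m, hm⟩ := Int.eq_ofNat_of_zero_le h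
      rw [map_smul, hm, Int.toNat_natCast, hφ, Finset.smul_sum]
      refine Finset.sum_congr rfl fun i _ => ?_
      dsimp only
      rw [smul_smul, ← add_assoc, hm]

lemma hasExpPolySymbol_algebraMap (r : k) :
    HasExpPolySymbol u (algebraMap k (Module.End k k[X]) r) :=
  .of_single 0 ((expPoly u).smul_mem r one_mem_expPoly) (fun b h => by omega)
    fun b => by simp

variable (u) in
def expPolySymbolOps : Subalgebra k (Module.End k k[X]) where
  carrier := {φ | HasExpPolySymbol u φ}
  mul_mem' := HasExpPolySymbol.mul
  add_mem' := HasExpPolySymbol.add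
  algebraMap_mem' := hasExpPolySymbol_algebraMap

lemma hasExpPolySymbol_lmul_X_pow (n : ℕ) : HasExpPolySymbol u (lmul k (X ^ n)) :=
  .of_single n one_mem_expPoly (fun b h => by omega) fun b => by
    rw [lmul, LinearMap.mulLeft_apply, ← pow_add, Pi.one_apply, one_smul]
    congr 1
    omega

lemma hasExpPolySymbol_sigma (a : ℤ) : HasExpPolySymbol u (sigma (u : k) a) :=
  .of_single 0 (expFun_mem_expPoly a) (fun b h => by omega) fun b => by
    rw [sigma, AlgHom.toLinearMap_apply, map_pow, aeval_X, mul_pow, ← C_pow, ← smul_eq_C_mul,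
      expFun, zpow_mul, zpow_natCast, add_zero, Int.toNat_natCast]

lemma dq_X_pow (q : k) (a : ℤ) (b : ℕ) :
    dq q a (X ^ b) = (∑ i ∈ Finset.range b, q ^ (a * (i : ℤ))) • X ^ (b - 1) := by
  have hb : (X : k[X]) ^ b = basisMonomials k b := by
    rw [coe_basisMonomials, X_pow_eq_monomial]
  rw [dq, hb, Module.Basis.constr_basis]

/-- By the geometric sum formula, the symbol of `∂^{β^a}` is `(q^(an) - 1) / (q^a - 1)`. -/
lemma hasExpPolySymbol_dq {a : ℤ} (ha : u ^ a ≠ 1) : HasExpPolySymbol u (dq (u : k) a) := by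
  have ha' : (u : k) ^ a ≠ 1 := by
    rwa [← Units.val_zpow_eq_zpow_val, Ne, Units.val_eq_one]
  refine .of_single (-1)
    ((expPoly u).smul_mem ((u : k) ^ a - 1)⁻¹
      (sub_mem (expFun_mem_expPoly a) one_mem_expPoly)) (fun b h => ?_) fun b => ?_
  · obtain rfl : b = 0 := by omega
    simp [expFun]
  · rw [dq_X_pow, show b - 1 = ((b : ℤ) + -1).toNat by omega]
    congr 1
    simp only [zpow_mul, zpow_natCast, geom_sum_eq ha', Pi.smul_apply, Pi.sub_apply,
      Pi.one_apply, expFun, smul_eq_mul]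
    field_simp

/-- The coefficient of `X^(b-1)` in `∂ (X^b) = b X^(b-1)` would be the exponential polynomial
`∑_{dᵢ = -1} cᵢ`. -/
theorem not_hasExpPolySymbol_dq_zero (hu : ¬IsOfFinOrder u) :
    ¬HasExpPolySymbol u (dq (u : k) 0) := by
  classical
  rintro ⟨ι, _, d, c, hc, hcv, hφ⟩
  have hmem : ∑ i ∈ Finset.univ.filter (d · = -1), c i ∈ expPoly u :=
    Submodule.sum_mem _ fun i _ => hc i
  obtain ⟨b, hb, hne⟩ := exists_natCast_ne_of_mem_expPoly hu hmem
  have hcoeff := congrArg (coeff · (b - 1)) (hφ b)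
  simp only [dq_X_pow, zero_mul, zpow_zero, Finset.sum_const, Finset.card_range, nsmul_eq_mul,
    mul_one, coeff_smul, coeff_X_pow_self, finsetSum_coeff, coeff_X_pow, smul_eq_mul] at hcoeff
  refine hne ?_
  rw [Finset.sum_apply, Finset.sum_filter, hcoeff]
  refine Finset.sum_congr rfl fun i _ => ?_
  by_cases hd : d i = -1
  · rw [if_pos hd, if_pos (by omega), mul_one]
  · rw [if_neg hd]
    by_cases hneg : (b : ℤ) + d i < 0
    · rw [hcv i b hneg, zero_mul]
    · rw [if_neg (by omega), mul_zero]

end ExpPolySymbol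

/-- the pair (∂, −λ_{y²}∘∂_y) does not lie in the subalgebra of
End_k(k[x]) × End_k(k[y]) generated by e, f, κ, κ'; hence η is not surjective. -/
theorem stmt17 [CharZero k] (q : k) (hq : Transcendental ℚ q) :
    (dq q 0, -(lmul k (X ^ 2) * dq q 0)) ∉
      Algebra.adjoin k ({eElt q, fElt q, kElt q, kElt' q} :
        Set (Module.End k k[X] × Module.End k k[X])) := by
  have hq0 : q ≠ 0 := fun h => hq (h ▸ isAlgebraic_zero)
  set u := Units.mk0 q hq0
  have hu : ¬IsOfFinOrder u :=
    fun h => hq (isAlgebraic_of_isOfFinOrder (Units.isOfFinOrder_val.2 h))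
  have hdq2 : dq q 2 ∈ expPolySymbolOps u :=
    hasExpPolySymbol_dq fun h => hu (isOfFinOrder_iff_zpow_eq_one.2 ⟨2, two_ne_zero, h⟩)
  have hσ (a : ℤ) : sigma q a ∈ expPolySymbolOps u := hasExpPolySymbol_sigma a
  have hlmul : lmul k (X ^ 2) ∈ expPolySymbolOps u := hasExpPolySymbol_lmul_X_pow 2
  have hgen : {eElt q, fElt q, kElt q, kElt' q} ⊆
      ((expPolySymbolOps u).comap (AlgHom.fst k _ (Module.End k k[X])) : Set _) := by
    simp only [Set.insert_subset_iff, Set.singleton_subset_iff, SetLike.mem_coe,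
      Subalgebra.mem_comap, AlgHom.fst_apply, eElt, fElt, kElt, kElt']
    exact ⟨neg_mem (Subalgebra.smul_mem _ (mul_mem hlmul hdq2) _),
      Subalgebra.smul_mem _ (mul_mem (hσ _) hdq2) _, hσ 2, hσ (-2)⟩
  exact fun hmem => not_hasExpPolySymbol_dq_zero hu (Algebra.adjoin_le hgen hmem)

end QDiff1
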